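/- Let $\{f(x|\theta)\}_{\theta \in \Theta}$, $\Theta \subset \mathbb{R}^q$, be a family of probability densities with respect to a $\sigma$-finite measure $\mu$ on $\mathfrak{X}$, and fix $G_0 = \sum_{i=1}^{k_0} p_i^0 \delta_{\theta_i^0}$ with $\theta_i^0$ in the interior of $\Theta$ and $p_i^0 \in (0,1)$. Assume: (a) there is a $\mu$-null set $\mathcal{N}$ such that for every $x \notin \mathcal{N}$, $\theta \mapsto f(x|\theta)$ is differentiable at each $\theta_i^0$; (b) there exist $(a_1,b_1,\ldots,a_{k_0},b_{k_0})$, not all zero, with $\sum_{i=1}^{k_0}(a_i^\top \nabla_\theta f(x|\theta_i^0) + b_i f(x|\theta_i^0)) = 0$ for $\mu$-a.e. $x \notin \mathcal{N}$; (c) for each $i$ there is $\gamma_i > 0$ and a $\mu$-integrable $\bar{f}_i$ such that $|f(x|\theta_i^0 + a_i\Delta) - f(x|\theta_i^0)|/\Delta \leq \bar{f}_i(x)$ for $\mu$-a.e. $x$ and all $0 < \Delta \leq \gamma_i$. Then $\liminf_{G \overset{W_1}{\to} G_0,\, G \in \mathcal{E}_{k_0}(\Theta)} \frac{V(p_G,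 p_{G_0})}{D_1(G, G_0)} = 0$. -/

import Mathlib

/-!
Move along the path `G_Δ` with atoms `θ0 i + (Δ / p0 i) • a i` and weights `p0 i + Δ * b i`.
For small `Δ > 0` the atoms stay distinct and inside `Θ`, `G_Δ → G₀` in `W₁`, and
`D₁(G_Δ, G₀) = Δ ∑ i, (‖a i‖ / p0 i + |b i|)` exactly, because distinct atoms of `G₀` stay far
apart. Dividing the displacement of atom `i` by `p0 i` makes `(p_{G_Δ} - p_{G₀}) / Δ` converge
pointwise to `∑ i, (⟪a i, ∇f(x|θ0 i)⟫ + b i f(x|θ0 i))`, which vanishes a.e.; condition (c)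
dominates these quotients, so `V(p_{G_Δ}, p_{G₀}) = o(Δ) = o(D₁)` by dominated convergence.

The weights stay a probability vector because `∑ i, b i = 0`: integrate the linear relation,
using `∫ f(·|θ0 i) = 1` and `∫ ⟪a i, ∇f(·|θ0 i)⟫ = 0`, the latter again by dominated
convergence, since `t ↦ ∫ f(·|θ0 i + t a i)` is constant.
-/

open MeasureTheory
open scoped BigOperators

/-- The `W₁` distance between two discrete measures on `ℝ^q` given by atoms/weights. -/
noncomputable def W1dist {q k : ℕ} (θ θ' : Fin k → EuclideanSpace ℝ (Fin q))
    (p p' : Fin k → ℝ) : ℝ :=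
  sInf {s : ℝ | ∃ Q : Fin k → Fin k → ℝ,
    (∀ i j, 0 ≤ Q i j) ∧ (∀ i, ∑ j, Q i j = p i) ∧ (∀ j, ∑ i, Q i j = p' j) ∧
    s = ∑ i, ∑ j, Q i j * dist (θ i) (θ' j)}

/-- The `D₁` distance between two discrete measures on `ℝ^q` given by atoms/weights. -/
noncomputable def D1dist {q k : ℕ} (θ θ' : Fin k → EuclideanSpace ℝ (Fin q))
    (p p' : Fin k → ℝ) : ℝ :=
  ⨅ τ : Equiv.Perm (Fin k), ∑ i, (dist (θ (τ i)) (θ' i) + |p (τ i) - p' i|)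

open Filter Topology
open scoped InnerProductSpace

section Analysis

variable {X : Type*} [MeasurableSpace X] {μ : Measure X}

theorem integrable_and_integral_eq_one_of_lintegral_ofReal {h : X → ℝ} (hm : Measurable h)
    (hnn : ∀ x, 0 ≤ h x) (hd : ∫⁻ x, ENNReal.ofReal (h x) ∂μ = 1) :
    Integrable h μ ∧ ∫ x, h x ∂μ = 1 := by
  have hnn' : 0 ≤ᵐ[μ] h := .of_forall hnn
  refine ⟨⟨hm.aestronglyMeasurable,
    (hasFiniteIntegral_iff_ofReal hnn').2 (hd ▸ ENNReal.one_lt_top)⟩, ?_⟩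
  rw [integral_eq_lintegral_of_nonneg_ae hnn' hm.aestronglyMeasurable, hd, ENNReal.toReal_one]

theorem integrable_of_tendsto_ae_of_dominated {ι G : Type*} [NormedAddCommGroup G]
    {l : Filter ι} [l.NeBot] [l.IsCountablyGenerated] {F : ι → X → G} {f : X → G}
    {bound : X → ℝ} (hF : ∀ᶠ i in l, AEStronglyMeasurable (F i) μ)
    (hbound : ∀ᶠ i in l, ∀ᵐ x ∂μ, ‖F i x‖ ≤ bound x) (hbound_int : Integrable bound μ)
    (hlim : ∀ᵐ x ∂μ, Tendsto (fun i => F i x) l (𝓝 (f x))) :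
    Integrable f μ := by
  obtain ⟨u, hu, hgood⟩ := exists_seq_forall_of_frequently (hF.and hbound).frequently
  have hlim' : ∀ᵐ x ∂μ, Tendsto (fun n => F (u n) x) atTop (𝓝 (f x)) :=
    hlim.mono fun x hx => hx.comp hu
  refine hbound_int.mono'
    (aestronglyMeasurable_of_tendsto_ae atTop (fun n => (hgood n).1) hlim') ?_
  filter_upwards [hlim', ae_all_iff.2 fun n => (hgood n).2] with x hx hb
  exact le_of_tendsto' (continuous_norm.tendsto _ |>.comp hx) hb

variable {E : Type*} [NormedAddCommGroup E] [InnerProductSpace ℝ E] [CompleteSpace E]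

theorem HasGradientAt.tendsto_slope_add_smul {φ : E → ℝ} {g θ : E} (h : HasGradientAt φ g θ)
    (v : E) :
    Tendsto (fun t : ℝ => (φ (θ + t • v) - φ θ) / t) (𝓝[≠] 0) (𝓝 ⟪v, g⟫_ℝ) := by
  have hline := hasDerivAt_iff_tendsto_slope.1 (h.hasFDerivAt.hasLineDerivAt v)
  rw [InnerProductSpace.toDual_apply_apply, real_inner_comm] at hline
  refine hline.congr fun t => ?_
  simp [slope_def_field]

theorem HasGradientAt.tendsto_weighted_slope {φ : E → ℝ} {g θ : E} (h : HasGradientAt φ g θ)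
    (a : E) {p : ℝ} (hp : p ≠ 0) (b : ℝ) :
    Tendsto (fun Δ : ℝ => ((p + Δ * b) * φ (θ + (Δ / p) • a) - p * φ θ) / Δ) (𝓝[≠] 0)
      (𝓝 (⟪a, g⟫_ℝ + b * φ θ)) := by
  have hscale : Tendsto (fun Δ : ℝ => Δ / p) (𝓝[≠] 0) (𝓝[≠] 0) :=
    tendsto_nhdsWithin_of_tendsto_nhds_of_eventually_within _
      ((continuous_id.div_const p).tendsto' 0 0 (zero_div p) |>.mono_left nhdsWithin_le_nhds)
      (eventually_mem_nhdsWithin.mono fun Δ hΔ => div_ne_zero hΔ hp)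
  have hweight : Tendsto (fun Δ : ℝ => (p + Δ * b) / p) (𝓝[≠] 0) (𝓝 1) :=
    (((continuous_const.add (continuous_id.mul continuous_const)).div_const p).tendsto' 0 1
      (by simp [hp])).mono_left nhdsWithin_le_nhds
  have hlim := (hweight.mul ((h.tendsto_slope_add_smul a).comp hscale)).add_const (b * φ θ)
  rw [one_mul] at hlim
  refine hlim.congr' (eventually_mem_nhdsWithin.mono fun Δ (hΔ : Δ ≠ 0) => ?_)
  simp only [Function.comp]
  field_simp
  ring

theorem integrable_and_integral_inner_gradient_eq_zero {f : X → E → ℝ} {θ v : E} {G : X → E}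
    {fbar : X → ℝ}
    (hint : ∀ᶠ t in 𝓝 (0 : ℝ), Integrable (fun x => f x (θ + t • v)) μ)
    (hconst : ∀ᶠ t in 𝓝 (0 : ℝ), ∫ x, f x (θ + t • v) ∂μ = ∫ x, f x θ ∂μ)
    (hG : ∀ᵐ x ∂μ, HasGradientAt (f x) (G x) θ) (hfbar : Integrable fbar μ)
    (hdom : ∀ᶠ t in 𝓝[>] 0, ∀ᵐ x ∂μ, |f x (θ + t • v) - f x θ| / t ≤ fbar x) :
    Integrable (fun x => ⟪v, G x⟫_ℝ) μ ∧ ∫ x, ⟪v, G x⟫_ℝ ∂μ = 0 := by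
  set Q : ℝ → X → ℝ := fun t x => (f x (θ + t • v) - f x θ) / t
  have hint0 : Integrable (fun x => f x θ) μ := by simpa using hint.self_of_nhds
  have hQint : ∀ᶠ t in 𝓝[>] 0, Integrable (Q t) μ :=
    (hint.filter_mono nhdsWithin_le_nhds).mono fun t ht => (ht.sub hint0).div_const t
  have hQmeas : ∀ᶠ t in 𝓝[>] 0, AEStronglyMeasurable (Q t) μ :=
    hQint.mono fun _ ht => ht.aestronglyMeasurable
  have hQbound : ∀ᶠ t in 𝓝[>] 0, ∀ᵐ x ∂μ, ‖Q t x‖ ≤ fbar x := by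
    filter_upwards [hdom, eventually_mem_nhdsWithin] with t ht (htpos : 0 < t)
    simpa only [Real.norm_eq_abs, Q, abs_div, abs_of_pos htpos] using ht
  have hQlim : ∀ᵐ x ∂μ, Tendsto (fun t => Q t x) (𝓝[>] 0) (𝓝 ⟪v, G x⟫_ℝ) :=
    hG.mono fun x hx => (hx.tendsto_slope_add_smul v).mono_left (nhdsGT_le_nhdsNE 0)
  have hQzero : ∀ᶠ t in 𝓝[>] 0, ∫ x, Q t x ∂μ = 0 := by
    filter_upwards [hint.filter_mono nhdsWithin_le_nhds, hconst.filter_mono nhdsWithin_le_nhds]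
      with t ht hc
    rw [integral_div, integral_sub ht hint0, hc, sub_self, zero_div]
  refine ⟨integrable_of_tendsto_ae_of_dominated hQmeas hQbound hfbar hQlim, ?_⟩
  exact tendsto_nhds_unique
    (tendsto_integral_filter_of_dominated_convergence fbar hQmeas hQbound hfbar hQlim)
    (tendsto_const_nhds.congr' (hQzero.mono fun _ ht => ht.symm))

end Analysis

theorem tendsto_div_const_nhdsGT_zero {p : ℝ} (hp : 0 < p) :
    Tendsto (fun Δ : ℝ => Δ / p) (𝓝[>] 0) (𝓝[>] 0) :=
  tendsto_nhdsWithin_of_tendsto_nhds_of_eventually_within _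
    ((continuous_id.div_const p).tendsto' 0 0 (zero_div p) |>.mono_left nhdsWithin_le_nhds)
    (eventually_mem_nhdsWithin.mono fun _ hΔ => div_pos hΔ hp)

theorem abs_weighted_sub_le {p Δ b A B F : ℝ} (hp : 0 < p) (hΔ : 0 < Δ) (hb : Δ * |b| ≤ p)
    (hAB : |A - B| / (Δ / p) ≤ F) : |(p + Δ * b) * A - p * B| ≤ Δ * (2 * F + |b| * |B|) := by
  have hAB' : |A - B| ≤ F * (Δ / p) := (div_le_iff₀ (by positivity)).1 hAB
  have hweight : |p + Δ * b| ≤ 2 * p := by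
    calc |p + Δ * b| ≤ |p| + |Δ * b| := abs_add_le _ _
      _ ≤ 2 * p := by rw [abs_of_pos hp, abs_mul, abs_of_pos hΔ]; linarith
  calc |(p + Δ * b) * A - p * B| = |(p + Δ * b) * (A - B) + Δ * (b * B)| := by ring_nf
    _ ≤ |p + Δ * b| * |A - B| + Δ * (|b| * |B|) := by
      refine (abs_add_le _ _).trans_eq ?_
      rw [abs_mul, abs_mul, abs_mul, abs_of_pos hΔ]
    _ ≤ 2 * p * (F * (Δ / p)) + Δ * (|b| * |B|) := by gcongr
    _ = Δ * (2 * F + |b| * |B|) := by field_simp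

section Mixture

variable {X E ι : Type*} [Fintype ι]

noncomputable def mixture (f : X → E → ℝ) (θ : ι → E) (p : ι → ℝ) (x : X) : ℝ :=
  ∑ i, p i * f x (θ i)

theorem mixture_sub_mixture (f : X → E → ℝ) (θ θ' : ι → E) (p p' : ι → ℝ) (x : X) :
    mixture f θ p x - mixture f θ' p' x = ∑ i, (p i * f x (θ i) - p' i * f x (θ' i)) := by
  simp only [mixture, Finset.sum_sub_distrib]

theorem integrable_mixture [MeasurableSpace X] {μ : Measure X} {f : X → E → ℝ} {θ : ι → E}
    (p : ι → ℝ)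
    (hf : ∀ i, Integrable (fun x => f x (θ i)) μ) : Integrable (mixture f θ p) μ :=
  integrable_finsetSum _ fun i _ => (hf i).const_mul (p i)

variable [NormedAddCommGroup E] [InnerProductSpace ℝ E]

noncomputable def perturbedAtoms (θ0 a : ι → E) (p0 : ι → ℝ) (Δ : ℝ) : ι → E :=
  fun i => θ0 i + (Δ / p0 i) • a i

noncomputable def perturbedWeights (p0 b : ι → ℝ) (Δ : ℝ) : ι → ℝ :=
  fun i => p0 i + Δ * b i

variable {f : X → E → ℝ} {θ0 a : ι → E} {p0 b : ι → ℝ}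

theorem tendsto_mixture_perturbed_sub_div [CompleteSpace E] {x : X} {g : ι → E}
    (hp0 : ∀ i, p0 i ≠ 0)
    (hg : ∀ i, HasGradientAt (f x) (g i) (θ0 i)) :
    Tendsto (fun Δ => (mixture f (perturbedAtoms θ0 a p0 Δ) (perturbedWeights p0 b Δ) x
      - mixture f θ0 p0 x) / Δ) (𝓝[≠] 0) (𝓝 (∑ i, (⟪a i, g i⟫_ℝ + b i * f x (θ0 i)))) := by
  simp only [mixture_sub_mixture, Finset.sum_div]
  exact tendsto_finsetSum _ fun i _ => (hg i).tendsto_weighted_slope (a i) (hp0 i) (b i)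

variable [MeasurableSpace X] {μ : Measure X}

theorem eventually_abs_mixture_perturbed_sub_le {fbar : ι → X → ℝ} (hp0 : ∀ i, 0 < p0 i)
    (hdom : ∀ i, ∀ᶠ t in 𝓝[>] 0, ∀ᵐ x ∂μ, |f x (θ0 i + t • a i) - f x (θ0 i)| / t ≤ fbar i x) :
    ∀ᶠ Δ in 𝓝[>] 0, ∀ᵐ x ∂μ,
      |mixture f (perturbedAtoms θ0 a p0 Δ) (perturbedWeights p0 b Δ) x - mixture f θ0 p0 x|
        ≤ Δ * ∑ i, (2 * fbar i x + |b i| * |f x (θ0 i)|) := by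
  have hsmall : ∀ i, ∀ᶠ Δ in 𝓝[>] (0 : ℝ), Δ * |b i| ≤ p0 i := fun i =>
    ((continuous_id.mul continuous_const).tendsto' 0 0 (zero_mul _)).eventually
      (ge_mem_nhds (hp0 i)) |>.filter_mono nhdsWithin_le_nhds
  filter_upwards [eventually_mem_nhdsWithin,
    eventually_all.2 fun i => (tendsto_div_const_nhdsGT_zero (hp0 i)).eventually (hdom i),
    eventually_all.2 hsmall] with Δ (hΔ : 0 < Δ) hdomΔ hsmallΔ
  filter_upwards [ae_all_iff.2 hdomΔ] with x hx
  rw [mixture_sub_mixture, Finset.mul_sum]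
  exact (Finset.abs_sum_le_sum_abs _ _).trans
    (Finset.sum_le_sum fun i _ => abs_weighted_sub_le (hp0 i) hΔ (hsmallΔ i) (hx i))

theorem tendsto_integral_abs_mixture_perturbed_sub_div [CompleteSpace E] {g : X → ι → E}
    {fbar : ι → X → ℝ} (hp0 : ∀ i, 0 < p0 i)
    (hint : ∀ i, ∀ᶠ t in 𝓝 (0 : ℝ), Integrable (fun x => f x (θ0 i + t • a i)) μ)
    (hG : ∀ i, ∀ᵐ x ∂μ, HasGradientAt (f x) (g x i) (θ0 i))
    (hlin : ∀ᵐ x ∂μ, ∑ i, (⟪a i, g x i⟫_ℝ + b i * f x (θ0 i)) = 0)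
    (hfbar : ∀ i, Integrable (fbar i) μ)
    (hdom : ∀ i, ∀ᶠ t in 𝓝[>] 0, ∀ᵐ x ∂μ, |f x (θ0 i + t • a i) - f x (θ0 i)| / t ≤ fbar i x) :
    Tendsto (fun Δ => (∫ x, |mixture f (perturbedAtoms θ0 a p0 Δ) (perturbedWeights p0 b Δ) x
      - mixture f θ0 p0 x| ∂μ) / Δ) (𝓝[>] 0) (𝓝 0) := by
  set S : ℝ → X → ℝ := fun Δ x =>
    mixture f (perturbedAtoms θ0 a p0 Δ) (perturbedWeights p0 b Δ) x - mixture f θ0 p0 x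
  have hint0 : ∀ i, Integrable (fun x => f x (θ0 i)) μ := fun i => by
    simpa using (hint i).self_of_nhds
  have hmeas : ∀ᶠ Δ in 𝓝[>] 0, AEStronglyMeasurable (fun x => |S Δ x| / Δ) μ := by
    have hintΔ : ∀ i, ∀ᶠ Δ in 𝓝 (0 : ℝ),
        Integrable (fun x => f x (θ0 i + (Δ / p0 i) • a i)) μ := fun i =>
      ((continuous_id.div_const (p0 i)).tendsto' 0 0 (zero_div _)).eventually (hint i)
    filter_upwards [(eventually_all.2 hintΔ).filter_mono nhdsWithin_le_nhds] with Δ hΔ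
    exact (((integrable_mixture _ hΔ).sub (integrable_mixture p0 hint0)).abs.div_const
      Δ).aestronglyMeasurable
  have hbound : ∀ᶠ Δ in 𝓝[>] 0, ∀ᵐ x ∂μ,
      ‖|S Δ x| / Δ‖ ≤ ∑ i, (2 * fbar i x + |b i| * |f x (θ0 i)|) := by
    filter_upwards [eventually_abs_mixture_perturbed_sub_le hp0 hdom, eventually_mem_nhdsWithin]
      with Δ hS (hΔ : 0 < Δ)
    filter_upwards [hS] with x hx
    rw [Real.norm_eq_abs, abs_div, abs_abs, abs_of_pos hΔ, div_le_iff₀' hΔ]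
    exact hx
  have hbound_int : Integrable (fun x => ∑ i, (2 * fbar i x + |b i| * |f x (θ0 i)|)) μ :=
    integrable_finsetSum _ fun i _ => ((hfbar i).const_mul 2).add ((hint0 i).abs.const_mul _)
  have hlim : ∀ᵐ x ∂μ, Tendsto (fun Δ => |S Δ x| / Δ) (𝓝[>] 0) (𝓝 0) := by
    filter_upwards [ae_all_iff.2 hG, hlin] with x hx hlinx
    have h :=
      (tendsto_mixture_perturbed_sub_div (a := a) (b := b) (fun i => (hp0 i).ne') hx).abs
    rw [hlinx, abs_zero] at h
    refine (h.mono_left (nhdsGT_le_nhdsNE 0)).congr' ?_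
    filter_upwards [eventually_mem_nhdsWithin] with Δ (hΔ : 0 < Δ)
    rw [abs_div, abs_of_pos hΔ]
  have hDCT := tendsto_integral_filter_of_dominated_convergence _ hmeas hbound hbound_int hlim
  rw [integral_zero] at hDCT
  exact hDCT.congr fun Δ => integral_div Δ _

end Mixture

theorem sum_eq_zero_of_ae_sum_inner_add_mul_eq_zero {X E ι : Type*} [MeasurableSpace X]
    {μ : Measure X} [NormedAddCommGroup E] [InnerProductSpace ℝ E] [Fintype ι] {f : X → E → ℝ}
    {θ0 a : ι → E} {g : X → ι → E} {b : ι → ℝ}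
    (hf : ∀ i, Integrable (fun x => f x (θ0 i)) μ) (hf_one : ∀ i, ∫ x, f x (θ0 i) ∂μ = 1)
    (hg : ∀ i, Integrable (fun x => ⟪a i, g x i⟫_ℝ) μ ∧ ∫ x, ⟪a i, g x i⟫_ℝ ∂μ = 0)
    (hlin : ∀ᵐ x ∂μ, ∑ i, (⟪a i, g x i⟫_ℝ + b i * f x (θ0 i)) = 0) :
    ∑ i, b i = 0 := by
  have hint : ∀ i, Integrable (fun x => ⟪a i, g x i⟫_ℝ + b i * f x (θ0 i)) μ := fun i =>
    (hg i).1.add ((hf i).const_mul (b i))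
  calc ∑ i, b i = ∑ i, ∫ x, (⟪a i, g x i⟫_ℝ + b i * f x (θ0 i)) ∂μ := by
        refine Finset.sum_congr rfl fun i _ => ?_
        rw [integral_add (hg i).1 ((hf i).const_mul (b i)), integral_const_mul, (hg i).2, hf_one,
          zero_add, mul_one]
    _ = ∫ x, ∑ i, (⟪a i, g x i⟫_ℝ + b i * f x (θ0 i)) ∂μ :=
        (integral_finsetSum _ fun i _ => hint i).symm
    _ = 0 := by rw [integral_congr_ae hlin, integral_zero]

section Coupling

variable {ι : Type*}

noncomputable def excess (p p' : ι → ℝ) (i : ι) : ℝ :=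
  p i - min (p i) (p' i)

theorem excess_nonneg (p p' : ι → ℝ) (i : ι) : 0 ≤ excess p p' i :=
  sub_nonneg.2 (min_le_left _ _)

theorem excess_le_abs (p p' : ι → ℝ) (i : ι) : excess p p' i ≤ |p i - p' i| := by
  rcases min_cases (p i) (p' i) with ⟨h, -⟩ | ⟨h, -⟩ <;> rw [excess, h]
  · simp
  · exact le_abs_self _

variable [Fintype ι]

theorem sum_excess_comm {p p' : ι → ℝ} (hsum : ∑ i, p i = ∑ i, p' i) :
    ∑ i, excess p p' i = ∑ i, excess p' p i := by
  simp only [excess, Finset.sum_sub_distrib, hsum, min_comm]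

theorem excess_mul_sum_excess_div (p p' : ι → ℝ) (i : ι) :
    excess p p' i * (∑ k, excess p p' k) / ∑ k, excess p p' k = excess p p' i :=
  mul_div_cancel_of_imp fun h =>
    (Finset.sum_eq_zero_iff_of_nonneg fun k _ => excess_nonneg p p' k).1 h i (Finset.mem_univ i)

variable [DecidableEq ι]

noncomputable def nearDiagonalCoupling (p p' : ι → ℝ) (i j : ι) : ℝ :=
  (if i = j then min (p i) (p' i) else 0) + excess p p' i * excess p' p j / ∑ k, excess p p' k

variable {p p' : ι → ℝ}

theorem nearDiagonalCoupling_nonneg (hp : ∀ i, 0 ≤ p i) (hp' : ∀ i, 0 ≤ p' i) (i j : ι) :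
    0 ≤ nearDiagonalCoupling p p' i j := by
  have hdiag : 0 ≤ (if i = j then min (p i) (p' i) else 0) := by
    split_ifs
    exacts [le_min (hp i) (hp' i), le_rfl]
  have hsum : 0 ≤ ∑ k, excess p p' k := Finset.sum_nonneg fun k _ => excess_nonneg p p' k
  exact add_nonneg hdiag
    (div_nonneg (mul_nonneg (excess_nonneg p p' i) (excess_nonneg p' p j)) hsum)

theorem sum_nearDiagonalCoupling_right (hsum : ∑ i, p i = ∑ i, p' i) (i : ι) :
    ∑ j, nearDiagonalCoupling p p' i j = p i := by
  have hspread : ∑ j, excess p p' i * excess p' p j / ∑ k, excess p p' k = excess p p' i := by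
    rw [← Finset.sum_div, ← Finset.mul_sum, ← sum_excess_comm hsum, excess_mul_sum_excess_div]
  simp only [nearDiagonalCoupling, Finset.sum_add_distrib, Finset.sum_ite_eq, Finset.mem_univ,
    if_true, hspread]
  rw [excess, add_sub_cancel]

theorem sum_nearDiagonalCoupling_left (hsum : ∑ i, p i = ∑ i, p' i) (j : ι) :
    ∑ i, nearDiagonalCoupling p p' i j = p' j := by
  have hspread : ∑ i, excess p p' i * excess p' p j / ∑ k, excess p p' k = excess p' p j := by
    rw [← Finset.sum_div, ← Finset.sum_mul, sum_excess_comm hsum, mul_comm,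
      excess_mul_sum_excess_div]
  simp only [nearDiagonalCoupling, Finset.sum_add_distrib, Finset.sum_ite_eq', Finset.mem_univ,
    if_true, hspread]
  rw [excess, min_comm, add_sub_cancel]

theorem sum_nearDiagonalCoupling_mul_le (hsum : ∑ i, p i = ∑ i, p' i) {c : ι → ι → ℝ}
    (hc : ∀ i j, 0 ≤ c i j) :
    ∑ i, ∑ j, nearDiagonalCoupling p p' i j * c i j
      ≤ ∑ i, p i * c i i + (∑ i, ∑ j, c i j) * ∑ i, |p i - p' i| := by
  set r := ∑ k, excess p p' k
  set C := ∑ i, ∑ j, c i j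
  have hcC : ∀ i j, c i j ≤ C := fun i j =>
    (Finset.single_le_sum (fun j _ => hc i j) (Finset.mem_univ j)).trans
      (Finset.single_le_sum (f := fun i => ∑ j, c i j)
        (fun i _ => Finset.sum_nonneg fun j _ => hc i j) (Finset.mem_univ i))
  have hdiag : ∑ i, ∑ j, (if i = j then min (p i) (p' i) else 0) * c i j ≤ ∑ i, p i * c i i := by
    simp only [ite_mul, zero_mul, Finset.sum_ite_eq, Finset.mem_univ, if_true]
    exact Finset.sum_le_sum fun i _ => mul_le_mul_of_nonneg_right (min_le_left _ _) (hc i i)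
  have hspread : ∑ i, ∑ j, excess p p' i * excess p' p j / r * c i j ≤ C * r := by
    calc ∑ i, ∑ j, excess p p' i * excess p' p j / r * c i j
        ≤ ∑ i, ∑ j, excess p p' i * excess p' p j / r * C := by
          gcongr with i _ j _
          · exact div_nonneg (mul_nonneg (excess_nonneg p p' i) (excess_nonneg p' p j))
              (Finset.sum_nonneg fun k _ => excess_nonneg p p' k)
          · exact hcC i j
      _ = C * (r * r / r) := by
          simp only [← Finset.sum_mul, ← Finset.sum_div, ← Finset.mul_sum, r,
            ← sum_excess_comm hsum]
          ring
      _ = C * r := by rw [mul_self_div_self]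
  have hr : r ≤ ∑ i, |p i - p' i| := Finset.sum_le_sum fun i _ => excess_le_abs p p' i
  have hC : 0 ≤ C := Finset.sum_nonneg fun i _ => Finset.sum_nonneg fun j _ => hc i j
  simp only [nearDiagonalCoupling, add_mul, Finset.sum_add_distrib]
  linarith [mul_le_mul_of_nonneg_left hr hC]

end Coupling

section Distances

variable {q k : ℕ}

theorem W1dist_nonneg (θ θ' : Fin k → EuclideanSpace ℝ (Fin q)) (p p' : Fin k → ℝ) :
    0 ≤ W1dist θ θ' p p' :=
  Real.sInf_nonneg <| by
    rintro _ ⟨Q, hQ, -, -, rfl⟩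
    exact Finset.sum_nonneg fun i _ => Finset.sum_nonneg fun j _ =>
      mul_nonneg (hQ i j) dist_nonneg

theorem W1dist_le {θ θ' : Fin k → EuclideanSpace ℝ (Fin q)} {p p' : Fin k → ℝ}
    (hp : ∀ i, 0 ≤ p i) (hp' : ∀ i, 0 ≤ p' i) (hsum : ∑ i, p i = ∑ i, p' i) :
    W1dist θ θ' p p' ≤
      ∑ i, p i * dist (θ i) (θ' i) + (∑ i, ∑ j, dist (θ i) (θ' j)) * ∑ i, |p i - p' i| := by
  have hbdd : BddBelow {s : ℝ | ∃ Q : Fin k → Fin k → ℝ,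
      (∀ i j, 0 ≤ Q i j) ∧ (∀ i, ∑ j, Q i j = p i) ∧ (∀ j, ∑ i, Q i j = p' j) ∧
      s = ∑ i, ∑ j, Q i j * dist (θ i) (θ' j)} := by
    refine ⟨0, ?_⟩
    rintro _ ⟨Q, hQ, -, -, rfl⟩
    exact Finset.sum_nonneg fun i _ => Finset.sum_nonneg fun j _ =>
      mul_nonneg (hQ i j) dist_nonneg
  exact (csInf_le hbdd ⟨nearDiagonalCoupling p p', nearDiagonalCoupling_nonneg hp hp',
    sum_nearDiagonalCoupling_right hsum, sum_nearDiagonalCoupling_left hsum, rfl⟩).trans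
    (sum_nearDiagonalCoupling_mul_le hsum fun _ _ => dist_nonneg)

theorem D1dist_eq_of_forall_ne {θ θ' : Fin k → EuclideanSpace ℝ (Fin q)} {p p' : Fin k → ℝ}
    {C : ℝ} (hdiag : ∑ i, (dist (θ i) (θ' i) + |p i - p' i|) = C)
    (hoff : ∀ i j, j ≠ i → C ≤ dist (θ j) (θ' i)) :
    D1dist θ θ' p p' = C := by
  have hbdd : BddBelow (Set.range fun τ : Equiv.Perm (Fin k) =>
      ∑ i, (dist (θ (τ i)) (θ' i) + |p (τ i) - p' i|)) := by
    refine ⟨0, ?_⟩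
    rintro _ ⟨τ, rfl⟩
    exact Finset.sum_nonneg fun i _ => add_nonneg dist_nonneg (abs_nonneg _)
  refine le_antisymm (by simpa [hdiag, D1dist] using ciInf_le hbdd 1) (le_ciInf fun τ => ?_)
  by_cases hτ : τ = 1
  · simp [hτ, hdiag]
  · obtain ⟨i, hi⟩ : ∃ i, τ i ≠ i := by simpa [Equiv.ext_iff] using hτ
    calc C ≤ dist (θ (τ i)) (θ' i) := hoff i (τ i) hi
      _ ≤ dist (θ (τ i)) (θ' i) + |p (τ i) - p' i| := le_add_of_nonneg_right (abs_nonneg _)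
      _ ≤ ∑ i, (dist (θ (τ i)) (θ' i) + |p (τ i) - p' i|) :=
        Finset.single_le_sum (f := fun j => dist (θ (τ j)) (θ' j) + |p (τ j) - p' j|)
          (fun j _ => add_nonneg dist_nonneg (abs_nonneg _)) (Finset.mem_univ i)

end Distances

theorem eventually_injective_of_tendsto {α ι E : Type*} [Finite ι] [TopologicalSpace E]
    [T2Space E] {l : Filter α} {θ : α → ι → E} {θ0 : ι → E} (h : Tendsto θ l (𝓝 θ0))
    (hθ0 : Function.Injective θ0) : ∀ᶠ Δ in l, Function.Injective (θ Δ) := by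
  have hne : ∀ i j, ∀ᶠ Δ in l, i ≠ j → θ Δ i ≠ θ Δ j := by
    intro i j
    by_cases hij : i = j
    · exact .of_forall fun _ h => absurd hij h
    · exact (((tendsto_pi_nhds.1 h i).prodMk_nhds (tendsto_pi_nhds.1 h j)).eventually
        ((isOpen_ne_fun continuous_fst continuous_snd).mem_nhds (hθ0.ne hij))).mono
          fun _ h _ => h
  filter_upwards [eventually_all.2 fun i => eventually_all.2 (hne i)] with Δ hΔ i j hij
  by_contra h
  exact hΔ i j h hij

theorem sum_norm_div_add_abs_pos {E ι : Type*} [NormedAddCommGroup E] [Fintype ι] {a : ι → E}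
    {p0 b : ι → ℝ} (hp0 : ∀ i, 0 < p0 i) (hab : ¬ ∀ i, a i = 0 ∧ b i = 0) :
    0 < ∑ i, (‖a i‖ / p0 i + |b i|) := by
  obtain ⟨i, hi⟩ := not_forall.1 hab
  refine Finset.sum_pos' (fun j _ => by have := hp0 j; positivity) ⟨i, Finset.mem_univ i, ?_⟩
  have := hp0 i
  by_cases ha : a i = 0
  · have : 0 < |b i| := abs_pos.2 fun hb => hi ⟨ha, hb⟩
    positivity
  · have : 0 < ‖a i‖ := norm_pos_iff.2 ha
    positivity

section Perturbation

variable {E ι : Type*} [NormedAddCommGroup E] [InnerProductSpace ℝ E] {p0 b : ι → ℝ}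

theorem tendsto_perturbedAtoms (θ0 a : ι → E) (p0 : ι → ℝ) :
    Tendsto (perturbedAtoms θ0 a p0) (𝓝 0) (𝓝 θ0) := by
  have hcont : Continuous (perturbedAtoms θ0 a p0) := by unfold perturbedAtoms; fun_prop
  exact hcont.tendsto' 0 θ0 (by funext i; simp [perturbedAtoms])

variable [Fintype ι]

theorem eventually_perturbedWeights_pos (hp0 : ∀ i, 0 < p0 i) :
    ∀ᶠ Δ in 𝓝 0, ∀ i, 0 < perturbedWeights p0 b Δ i := by
  have hcont : Continuous (perturbedWeights p0 b) := by unfold perturbedWeights; fun_prop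
  have hlim : Tendsto (perturbedWeights p0 b) (𝓝 0) (𝓝 p0) :=
    hcont.tendsto' 0 p0 (by funext i; simp [perturbedWeights])
  exact eventually_all.2 fun i => (tendsto_pi_nhds.1 hlim i).eventually_const_lt (hp0 i)

theorem sum_perturbedWeights (hb : ∑ i, b i = 0) (Δ : ℝ) :
    ∑ i, perturbedWeights p0 b Δ i = ∑ i, p0 i := by
  simp [perturbedWeights, Finset.sum_add_distrib, ← Finset.mul_sum, hb]

end Perturbation

section PerturbationDistances

variable {q k : ℕ} {θ0 a : Fin k → EuclideanSpace ℝ (Fin q)} {p0 b : Fin k → ℝ}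

theorem tendsto_W1dist_perturbed (hp0 : ∀ i, 0 < p0 i) (hb : ∑ i, b i = 0) :
    Tendsto (fun Δ => W1dist (perturbedAtoms θ0 a p0 Δ) θ0 (perturbedWeights p0 b Δ) p0)
      (𝓝 0) (𝓝 0) := by
  have hcont : Continuous fun Δ =>
      ∑ i, perturbedWeights p0 b Δ i * dist (perturbedAtoms θ0 a p0 Δ i) (θ0 i) +
        (∑ i, ∑ j, dist (perturbedAtoms θ0 a p0 Δ i) (θ0 j)) *
          ∑ i, |perturbedWeights p0 b Δ i - p0 i| := by
    unfold perturbedAtoms perturbedWeights; fun_prop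
  have hbound := hcont.tendsto 0
  simp only [perturbedAtoms, perturbedWeights, zero_div, zero_smul, add_zero, zero_mul,
    dist_self, mul_zero, sub_self, abs_zero, Finset.sum_const_zero] at hbound
  refine tendsto_of_tendsto_of_tendsto_of_le_of_le' tendsto_const_nhds hbound
    (.of_forall fun Δ => W1dist_nonneg _ _ _ _) ?_
  filter_upwards [eventually_perturbedWeights_pos hp0] with Δ hΔ
  exact W1dist_le (fun i => (hΔ i).le) (fun i => (hp0 i).le) (sum_perturbedWeights hb Δ)

theorem eventually_D1dist_perturbed_eq (hθ0 : Function.Injective θ0) (hp0 : ∀ i, 0 < p0 i) :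
    ∀ᶠ Δ in 𝓝[>] 0, D1dist (perturbedAtoms θ0 a p0 Δ) θ0 (perturbedWeights p0 b Δ) p0 =
      Δ * ∑ i, (‖a i‖ / p0 i + |b i|) := by
  set C := ∑ i, (‖a i‖ / p0 i + |b i|)
  have hoff : ∀ i j, ∀ᶠ Δ in 𝓝 0, j ≠ i →
      Δ * C < dist (perturbedAtoms θ0 a p0 Δ j) (θ0 i) := by
    intro i j
    by_cases hji : j = i
    · exact .of_forall fun _ h => absurd hji h
    · have hdist := (tendsto_pi_nhds.1 (tendsto_perturbedAtoms θ0 a p0) j).dist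
        (tendsto_const_nhds (x := θ0 i))
      have hscale : Tendsto (fun Δ : ℝ => Δ * C) (𝓝 0) (𝓝 0) := by
        simpa using (continuous_mul_const C).tendsto 0
      exact (hscale.eventually_lt hdist (dist_pos.2 (hθ0.ne hji))).mono fun _ h _ => h
  filter_upwards [(eventually_all.2 fun i => eventually_all.2 (hoff i)).filter_mono
    nhdsWithin_le_nhds, eventually_mem_nhdsWithin] with Δ hΔoff (hΔ : 0 < Δ)
  refine D1dist_eq_of_forall_ne ?_ fun i j hji => (hΔoff i j hji).le
  rw [Finset.mul_sum]
  refine Finset.sum_congr rfl fun i _ => ?_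
  have := hp0 i
  rw [perturbedAtoms, perturbedWeights, dist_self_add_left, add_sub_cancel_left, norm_smul,
    Real.norm_eq_abs, abs_of_pos (by positivity), abs_mul, abs_of_pos hΔ]
  ring

end PerturbationDistances

theorem exists_near_mixture_with_small_variation {X : Type*} [MeasurableSpace X]
    {μ : Measure X}
    {q k : ℕ} {Θ : Set (EuclideanSpace ℝ (Fin q))} {f : X → EuclideanSpace ℝ (Fin q) → ℝ}
    {θ0 a : Fin k → EuclideanSpace ℝ (Fin q)} {g : X → Fin k → EuclideanSpace ℝ (Fin q)}
    {p0 b : Fin k → ℝ} {fbar : Fin k → X → ℝ}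
    (hθ0 : ∀ i, θ0 i ∈ interior Θ) (hθ0inj : Function.Injective θ0) (hp0 : ∀ i, 0 < p0 i)
    (hab : ¬ ∀ i, a i = 0 ∧ b i = 0) (hb : ∑ i, b i = 0)
    (hint : ∀ i, ∀ᶠ t in 𝓝 (0 : ℝ), Integrable (fun x => f x (θ0 i + t • a i)) μ)
    (hgrad : ∀ i, ∀ᵐ x ∂μ, HasGradientAt (f x) (g x i) (θ0 i))
    (hlin : ∀ᵐ x ∂μ, ∑ i, (⟪a i, g x i⟫_ℝ + b i * f x (θ0 i)) = 0)
    (hfbar : ∀ i, Integrable (fbar i) μ)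
    (hdom : ∀ i, ∀ᶠ t in 𝓝[>] 0, ∀ᵐ x ∂μ,
      |f x (θ0 i + t • a i) - f x (θ0 i)| / t ≤ fbar i x)
    {c δ : ℝ} (hc : 0 < c) (hδ : 0 < δ) :
    ∃ (θ : Fin k → EuclideanSpace ℝ (Fin q)) (p : Fin k → ℝ),
      (∀ i, θ i ∈ Θ) ∧ Function.Injective θ ∧ (∀ i, 0 < p i) ∧ ∑ i, p i = ∑ i, p0 i ∧
      0 < D1dist θ θ0 p p0 ∧ W1dist θ θ0 p p0 < δ ∧
      (1 / 2) * ∫ x, |mixture f θ p x - mixture f θ0 p0 x| ∂μ ≤ c * D1dist θ θ0 p p0 := by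
  have hC := sum_norm_div_add_abs_pos hp0 hab
  have hΘ : ∀ᶠ Δ in 𝓝 0, ∀ i, perturbedAtoms θ0 a p0 Δ i ∈ Θ := eventually_all.2 fun i =>
    (tendsto_pi_nhds.1 (tendsto_perturbedAtoms θ0 a p0) i).eventually
      (mem_interior_iff_mem_nhds.1 (hθ0 i))
  have hV := (tendsto_integral_abs_mixture_perturbed_sub_div hp0 hint hgrad hlin hfbar
    hdom).eventually (gt_mem_nhds (by positivity : 0 < 2 * c * ∑ i, (‖a i‖ / p0 i + |b i|)))
  obtain ⟨Δ, ⟨hΘΔ, hinjΔ, hposΔ, hW1Δ⟩, hD1Δ, hVΔ, hΔ⟩ :=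
    (((hΘ.and ((eventually_injective_of_tendsto (tendsto_perturbedAtoms θ0 a p0) hθ0inj).and
      ((eventually_perturbedWeights_pos hp0).and
        ((tendsto_W1dist_perturbed hp0 hb).eventually (gt_mem_nhds hδ))))).filter_mono
      nhdsWithin_le_nhds).and ((eventually_D1dist_perturbed_eq hθ0inj hp0).and
        (hV.and eventually_mem_nhdsWithin))).exists
  refine ⟨_, _, hΘΔ, hinjΔ, hposΔ, sum_perturbedWeights hb Δ, ?_, hW1Δ, ?_⟩
  · rw [hD1Δ]
    exact mul_pos hΔ hC
  · rw [hD1Δ]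
    rw [div_lt_iff₀ hΔ] at hVΔ
    linarith

theorem stmt_16_general {X : Type*} [MeasurableSpace X] (μ : Measure X)
    (q k0 : ℕ)
    (Θ : Set (EuclideanSpace ℝ (Fin q)))
    (f : X → EuclideanSpace ℝ (Fin q) → ℝ)
    (hfmeas : ∀ ϑ ∈ Θ, Measurable fun x => f x ϑ)
    (hfnn : ∀ ϑ ∈ Θ, ∀ x, 0 ≤ f x ϑ)
    (hfdens : ∀ ϑ ∈ Θ, ∫⁻ x, ENNReal.ofReal (f x ϑ) ∂μ = 1)
    (θ0 : Fin k0 → EuclideanSpace ℝ (Fin q)) (hθ0 : ∀ i, θ0 i ∈ interior Θ)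
    (hθ0inj : Function.Injective θ0)
    (p0 : Fin k0 → ℝ) (hp0 : ∀ i, 0 < p0 i ∧ p0 i < 1) (hp0s : ∑ i, p0 i = 1)
    (Nset : Set X) (hNnull : μ Nset = 0)
    (g : X → Fin k0 → EuclideanSpace ℝ (Fin q))
    (hdiff : ∀ x ∉ Nset, ∀ i, HasGradientAt (fun ϑ => f x ϑ) (g x i) (θ0 i))
    (a : Fin k0 → EuclideanSpace ℝ (Fin q)) (b : Fin k0 → ℝ)
    (hnz : ¬ ∀ i, a i = 0 ∧ b i = 0)
    (hlin : ∀ᵐ x ∂μ, x ∉ Nset →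
        ∑ i, ((inner ℝ (a i) (g x i) : ℝ) + b i * f x (θ0 i)) = 0)
    (hdom : ∀ i, ∃ γ > (0 : ℝ), ∃ fbar : X → ℝ, Integrable fbar μ ∧
        ∀ Δ : ℝ, 0 < Δ → Δ ≤ γ →
          ∀ᵐ x ∂μ, |f x (θ0 i + Δ • a i) - f x (θ0 i)| / Δ ≤ fbar x) :
    ∀ c > (0 : ℝ), ∀ δ > (0 : ℝ),
      ∃ (θ : Fin k0 → EuclideanSpace ℝ (Fin q)) (p : Fin k0 → ℝ),
        (∀ i, θ i ∈ Θ) ∧ Function.Injective θ ∧ (∀ i, 0 < p i) ∧ (∑ i, p i = 1) ∧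
        0 < D1dist θ θ0 p p0 ∧ W1dist θ θ0 p p0 < δ ∧
        (1 / 2) * ∫ x, |(∑ i, p i * f x (θ i)) - ∑ i, p0 i * f x (θ0 i)| ∂μ
          ≤ c * D1dist θ θ0 p p0 := by
  intro c hc δ hδ
  choose γ hγ fbar hfbar hbound using hdom
  have hp0pos : ∀ i, 0 < p0 i := fun i => (hp0 i).1
  have hdens : ∀ ϑ ∈ Θ, Integrable (fun x => f x ϑ) μ ∧ ∫ x, f x ϑ ∂μ = 1 := fun ϑ hϑ =>
    integrable_and_integral_eq_one_of_lintegral_ofReal (hfmeas ϑ hϑ) (hfnn ϑ hϑ) (hfdens ϑ hϑ)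
  have hθ0Θ : ∀ i, θ0 i ∈ Θ := fun i => interior_subset (hθ0 i)
  have hline : ∀ i, ∀ᶠ t in 𝓝 (0 : ℝ), θ0 i + t • a i ∈ Θ := fun i =>
    ((continuous_const.add (continuous_id.smul continuous_const)).tendsto' 0 (θ0 i)
      (by simp)).eventually (mem_interior_iff_mem_nhds.1 (hθ0 i))
  have hint : ∀ i, ∀ᶠ t in 𝓝 (0 : ℝ), Integrable (fun x => f x (θ0 i + t • a i)) μ := fun i =>
    (hline i).mono fun _ ht => (hdens _ ht).1
  have hN : ∀ᵐ x ∂μ, x ∉ Nset := measure_eq_zero_iff_ae_notMem.1 hNnull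
  have hgrad : ∀ i, ∀ᵐ x ∂μ, HasGradientAt (f x) (g x i) (θ0 i) := fun i =>
    hN.mono fun x hx => hdiff x hx i
  have hlin' : ∀ᵐ x ∂μ, ∑ i, (⟪a i, g x i⟫_ℝ + b i * f x (θ0 i)) = 0 :=
    (hN.and hlin).mono fun x hx => hx.2 hx.1
  have hdom' : ∀ i, ∀ᶠ t in 𝓝[>] 0, ∀ᵐ x ∂μ,
      |f x (θ0 i + t • a i) - f x (θ0 i)| / t ≤ fbar i x := fun i =>
    Filter.mem_of_superset (Ioc_mem_nhdsGT (hγ i)) fun t ht => hbound i t ht.1 ht.2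
  have hgrad_int : ∀ i, Integrable (fun x => ⟪a i, g x i⟫_ℝ) μ ∧ ∫ x, ⟪a i, g x i⟫_ℝ ∂μ = 0 :=
    fun i => integrable_and_integral_inner_gradient_eq_zero (hint i)
      ((hline i).mono fun _ ht => (hdens _ ht).2.trans (hdens _ (hθ0Θ i)).2.symm)
      (hgrad i) (hfbar i) (hdom' i)
  have hb : ∑ i, b i = 0 := sum_eq_zero_of_ae_sum_inner_add_mul_eq_zero
    (fun i => (hdens _ (hθ0Θ i)).1) (fun i => (hdens _ (hθ0Θ i)).2) hgrad_int hlin'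
  obtain ⟨θ, p, hθΘ, hθinj, hp, hpsum, hD1, hW1, hV⟩ :=
    exists_near_mixture_with_small_variation hθ0 hθ0inj hp0pos hnz hb hint hgrad hlin' hfbar
      hdom' hc hδ
  exact ⟨θ, p, hθΘ, hθinj, hp, hpsum.trans hp0s, hD1, hW1, hV⟩

/-- Lack of first-order identifiability: if the "gradient + density" linear system at the
atoms of `G₀` has a nonzero solution `(a,b)` and the dominated difference-quotient
condition holds, then `liminf_{G →W₁ G₀} V(p_G, p_{G₀})/D₁(G,G₀) = 0`. -/
theorem stmt_16 {X : Type*} [MeasurableSpace X] (μ : Measure X) [SigmaFinite μ]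
    (q k0 : ℕ) (hk0 : 1 ≤ k0)
    (Θ : Set (EuclideanSpace ℝ (Fin q)))
    (f : X → EuclideanSpace ℝ (Fin q) → ℝ)
    (hfmeas : ∀ ϑ ∈ Θ, Measurable fun x => f x ϑ)
    (hfnn : ∀ ϑ ∈ Θ, ∀ x, 0 ≤ f x ϑ)
    (hfdens : ∀ ϑ ∈ Θ, ∫⁻ x, ENNReal.ofReal (f x ϑ) ∂μ = 1)
    (θ0 : Fin k0 → EuclideanSpace ℝ (Fin q)) (hθ0 : ∀ i, θ0 i ∈ interior Θ)
    (hθ0inj : Function.Injective θ0)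
    (p0 : Fin k0 → ℝ) (hp0 : ∀ i, 0 < p0 i ∧ p0 i < 1) (hp0s : ∑ i, p0 i = 1)
    (Nset : Set X) (hNmeas : MeasurableSet Nset) (hNnull : μ Nset = 0)
    (g : X → Fin k0 → EuclideanSpace ℝ (Fin q))
    (hdiff : ∀ x ∉ Nset, ∀ i, HasGradientAt (fun ϑ => f x ϑ) (g x i) (θ0 i))
    (a : Fin k0 → EuclideanSpace ℝ (Fin q)) (b : Fin k0 → ℝ)
    (hnz : ¬ ∀ i, a i = 0 ∧ b i = 0)
    (hlin : ∀ᵐ x ∂μ, x ∉ Nset →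
        ∑ i, ((inner ℝ (a i) (g x i) : ℝ) + b i * f x (θ0 i)) = 0)
    (hdom : ∀ i, ∃ γ > (0 : ℝ), ∃ fbar : X → ℝ, Integrable fbar μ ∧
        ∀ Δ : ℝ, 0 < Δ → Δ ≤ γ →
          ∀ᵐ x ∂μ, |f x (θ0 i + Δ • a i) - f x (θ0 i)| / Δ ≤ fbar x) :
    ∀ c > (0 : ℝ), ∀ δ > (0 : ℝ),
      ∃ (θ : Fin k0 → EuclideanSpace ℝ (Fin q)) (p : Fin k0 → ℝ),
        (∀ i, θ i ∈ Θ) ∧ Function.Injective θ ∧ (∀ i, 0 < p i) ∧ (∑ i, p i = 1) ∧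
        0 < D1dist θ θ0 p p0 ∧ W1dist θ θ0 p p0 < δ ∧
        (1 / 2) * ∫ x, |(∑ i, p i * f x (θ i)) - ∑ i, p0 i * f x (θ0 i)| ∂μ
          ≤ c * D1dist θ θ0 p p0 :=
  stmt_16_general μ q k0 Θ f hfmeas hfnn hfdens θ0 hθ0 hθ0inj p0 hp0 hp0s Nset hNnull g hdiff a b
    hnz hlin hdom
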